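/- If n/2 − gn/s ≤ k ≤ n/2 + gn/s, where j_l := max{⌈n/2 − gn/s⌉, 1} and j_r := min{⌈n/2 + gn/s⌉, n}, and the pivot v is the ⌈s/2⌉-th smallest element of a uniformly random s-element sample from X, then P[v < x*_{j_l}] ≤ exp(−2g²/s) and P[x*_{j_r} < v] ≤ exp(−2g²/s). -/

import Mathlib

open MeasureTheory
open Finset
open scoped ENNReal

/-- The `i`-th smallest (1-indexed) element of a multiset of reals. -/
noncomputable def kthSmallest (m : Multiset ℝ) (i : ℕ) : ℝ :=
  (m.sort (· ≤ ·)).getD (i - 1) 0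

section Helpers

lemma descF_mul_pow_le (m n : ℕ) (h : m ≤ n) : ∀ j, m.descFactorial j * n ^ j ≤ n.descFactorial j * m ^ j := by
  intro j
  induction j with
  | zero => simp
  | succ j ih =>
    rw [Nat.descFactorial_succ, Nat.descFactorial_succ, pow_succ, pow_succ]
    calc (m - j) * m.descFactorial j * (n ^ j * n)
        = ((m - j) * n) * (m.descFactorial j * n ^ j) := by ring
      _ ≤ ((n - j) * m) * (n.descFactorial j * m ^ j) := by
          refine Nat.mul_le_mul ?_ ih
          rw [Nat.sub_mul, Nat.sub_mul, Nat.mul_comm n m]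
          exact Nat.sub_le_sub_left (Nat.mul_le_mul_left j h) _
      _ = (n - j) * n.descFactorial j * (m ^ j * m) := by ring

lemma choose_mul_pow_le (m n j : ℕ) (h : m ≤ n) :
    m.choose j * n ^ j ≤ n.choose j * m ^ j := by
  have h2 := descF_mul_pow_le m n h j
  rw [Nat.descFactorial_eq_factorial_mul_choose, Nat.descFactorial_eq_factorial_mul_choose,
    mul_assoc, mul_assoc] at h2
  exact Nat.le_of_mul_le_mul_left h2 (Nat.factorial_pos j)

lemma count_supersets {n j s : ℕ} (hjs : j ≤ s) (J : Finset (Fin n)) (hJ : J.card = j) :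
    (((Finset.univ : Finset (Fin n)).powersetCard s).filter (fun A => J ⊆ A)).card
      = (n - j).choose (s - j) := by
  have hkey : (((Finset.univ : Finset (Fin n)).powersetCard s).filter (fun A => J ⊆ A)).card
      = (Jᶜ.powersetCard (s - j)).card := by
    apply Finset.card_bij' (fun A _ => A \ J) (fun B _ => B ∪ J)
    · intro A hA
      simp only [mem_filter, mem_powersetCard] at hA
      simp only [mem_powersetCard]
      constructor
      · intro x hx
        simp only [mem_sdiff] at hx
        simp [Finset.mem_compl, hx.2]
      · rw [Finset.card_sdiff_of_subset hA.2, hA.1.2, hJ]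
    · intro B hB
      simp only [mem_powersetCard] at hB
      have hdisj : Disjoint B J := by
        rw [Finset.disjoint_left]
        intro x hx hxJ
        exact (Finset.mem_compl.1 (hB.1 hx)) hxJ
      simp only [mem_filter, mem_powersetCard]
      refine ⟨⟨Finset.subset_univ _, ?_⟩, Finset.subset_union_right⟩
      rw [Finset.card_union_of_disjoint hdisj, hB.2, hJ]
      omega
    · intro A hA
      simp only [mem_filter] at hA
      exact Finset.sdiff_union_of_subset hA.2
    · intro B hB
      simp only [mem_powersetCard] at hB
      have hdisj : Disjoint B J := by
        rw [Finset.disjoint_left]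
        intro x hx hxJ
        exact (Finset.mem_compl.1 (hB.1 hx)) hxJ
      rw [Finset.union_sdiff_right, Finset.sdiff_eq_self_of_disjoint hdisj]
  rw [hkey, Finset.card_powersetCard, Finset.card_compl, hJ, Fintype.card_fin]

lemma sum_choose_inter {n s j : ℕ} (hjs : j ≤ s) (T : Finset (Fin n)) :
    ∑ A ∈ (Finset.univ : Finset (Fin n)).powersetCard s, ((A ∩ T).card.choose j)
      = T.card.choose j * (n - j).choose (s - j) := by
  have hstep : ∀ A ∈ (Finset.univ : Finset (Fin n)).powersetCard s,
      (A ∩ T).card.choose j = ∑ J ∈ T.powersetCard j, if J ⊆ A then 1 else 0 := by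
    intro A _
    rw [← Finset.sum_filter]
    have : (T.powersetCard j).filter (fun J => J ⊆ A) = (A ∩ T).powersetCard j := by
      ext J
      simp only [mem_filter, mem_powersetCard, Finset.subset_inter_iff]
      tauto
    rw [this]
    simp [Finset.card_powersetCard]
  rw [Finset.sum_congr rfl hstep, Finset.sum_comm]
  have hinner : ∀ J ∈ T.powersetCard j,
      (∑ A ∈ (Finset.univ : Finset (Fin n)).powersetCard s, if J ⊆ A then (1:ℕ) else 0)
        = (n - j).choose (s - j) := by
    intro J hJ
    rw [← Finset.sum_filter]
    simp only [Finset.sum_const, smul_eq_mul, mul_one]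
    exact count_supersets hjs J (mem_powersetCard.1 hJ).2
  rw [Finset.sum_congr rfl hinner, Finset.sum_const, Finset.card_powersetCard, smul_eq_mul]

lemma chvatal {n s : ℕ} (hsn : s ≤ n) (hn : 0 < n) (T : Finset (Fin n)) (y : ℝ) (hy : 1 ≤ y) :
    ∑ A ∈ (Finset.univ : Finset (Fin n)).powersetCard s, y ^ (A ∩ T).card
      ≤ (n.choose s : ℝ) * (1 + ((T.card : ℝ) / n) * (y - 1)) ^ s := by
  set m := T.card with hm
  have hmn : m ≤ n := by
    calc m ≤ Fintype.card (Fin n) := by rw [hm, ← Finset.card_univ]; exact Finset.card_le_card (Finset.subset_univ T)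
      _ = n := Fintype.card_fin n
  set z : ℝ := y - 1 with hz
  have hz0 : 0 ≤ z := by simp only [hz]; linarith
  have hexp : ∀ A ∈ (Finset.univ : Finset (Fin n)).powersetCard s,
      y ^ (A ∩ T).card = ∑ j ∈ Finset.range (s+1), ((A ∩ T).card.choose j : ℝ) * z ^ j := by
    intro A hA
    have hcard : (A ∩ T).card ≤ s := by
      have h2 := (mem_powersetCard.1 hA).2
      calc (A ∩ T).card ≤ A.card := Finset.card_le_card Finset.inter_subset_left
        _ = s := h2
    have h1 : y = z + 1 := by ring
    rw [h1, add_pow]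
    simp only [one_pow, mul_one]
    rw [Finset.sum_subset (Finset.range_subset_range.2 (Nat.succ_le_succ hcard))]
    · exact Finset.sum_congr rfl (fun j _ => by ring)
    · intro j hjr hj
      have hlt : (A ∩ T).card < j := by
        simp only [Finset.mem_range, not_lt] at hj
        omega
      rw [Nat.choose_eq_zero_of_lt hlt]
      simp
  rw [Finset.sum_congr rfl hexp, Finset.sum_comm]
  have hrhs : (1 + ((m : ℝ) / n) * z) ^ s
      = ∑ j ∈ Finset.range (s+1), (s.choose j : ℝ) * (((m : ℝ) / n) ^ j * z ^ j) := by
    rw [add_comm, add_pow]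
    exact Finset.sum_congr rfl (fun j _ => by rw [mul_pow]; ring)
  rw [hrhs, Finset.mul_sum]
  apply Finset.sum_le_sum
  intro j hj
  have hjs : j ≤ s := by simp at hj; omega
  rw [← Finset.sum_mul, ← Nat.cast_sum, sum_choose_inter hjs T, ← hm]
  have hid : (n.choose s : ℝ) * (s.choose j) = (n.choose j : ℝ) * ((n-j).choose (s-j)) := by
    rw [← Nat.cast_mul, ← Nat.cast_mul, Nat.choose_mul hjs]
  have hkey : (m.choose j : ℝ) ≤ (n.choose j : ℝ) * ((m : ℝ)/n) ^ j := by
    have hc := choose_mul_pow_le m n j hmn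
    have hcR : (m.choose j : ℝ) * (n : ℝ) ^ j ≤ (n.choose j : ℝ) * (m : ℝ) ^ j := by
      exact_mod_cast hc
    have hnpos : (0:ℝ) < (n:ℝ) ^ j := by positivity
    rw [div_pow, ← mul_div_assoc, le_div_iff₀ hnpos]
    linarith
  calc ((m.choose j * (n-j).choose (s-j) : ℕ) : ℝ) * z ^ j
      = (m.choose j : ℝ) * (((n-j).choose (s-j) : ℝ) * z ^ j) := by push_cast; ring
    _ ≤ (n.choose j : ℝ) * ((m : ℝ)/n) ^ j * (((n-j).choose (s-j) : ℝ) * z ^ j) := by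
        apply mul_le_mul_of_nonneg_right hkey (by positivity)
    _ = (n.choose s : ℝ) * ((s.choose j : ℝ) * (((m:ℝ)/n) ^ j * z ^ j)) := by
        rw [show (n.choose s : ℝ) * ((s.choose j : ℝ) * (((m:ℝ)/n) ^ j * z ^ j))
            = ((n.choose s : ℝ) * (s.choose j)) * (((m:ℝ)/n) ^ j * z ^ j) by ring, hid]
        ring

lemma bern_mgf (p u : ℝ) (hp0 : 0 ≤ p) (hp1 : p ≤ 1) (hu : 0 ≤ u) :
    1 - p + p * Real.exp u ≤ Real.exp (p * u + u ^ 2 / 8) := by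
  set D : ℝ → ℝ := fun t => 1 - p + p * Real.exp t with hD
  have hDpos : ∀ t, 0 < D t := by
    intro t
    have he := Real.exp_pos t
    rcases eq_or_lt_of_le hp1 with h | h
    · simp only [hD, ← h]; nlinarith
    · simp only [hD]; nlinarith
  have hDd : ∀ t, HasDerivAt D (p * Real.exp t) t := fun t =>
    ((Real.hasDerivAt_exp t).const_mul p).const_add (1 - p)
  set G : ℝ → ℝ := fun t => p * Real.exp t / D t with hG
  have hGd : ∀ t, HasDerivAt G (p * Real.exp t * (1 - p) / (D t) ^ 2) t := by
    intro t
    have h1 := ((Real.hasDerivAt_exp t).const_mul p).div (hDd t) (ne_of_gt (hDpos t))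
    refine h1.congr_deriv ?_
    have h2 : D t - p * Real.exp t = 1 - p := by simp only [hD]; ring
    congr 1
    linear_combination (p * Real.exp t) * h2
  -- K := G - t/4 is antitone
  set K : ℝ → ℝ := fun t => G t - t / 4 with hK
  have hKd : ∀ t, HasDerivAt K (p * Real.exp t * (1 - p) / (D t) ^ 2 - 1/4) t := by
    intro t
    exact (hGd t).sub ((hasDerivAt_id t).div_const 4)
  have hKanti : Antitone K := by
    apply antitone_of_deriv_nonpos
    · intro t; exact (hKd t).differentiableAt
    · intro t
      rw [(hKd t).deriv]
      have h2 : p * Real.exp t * (1 - p) / (D t) ^ 2 ≤ 1/4 := by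
        rw [div_le_iff₀ (pow_pos (hDpos t) 2)]
        have : D t = 1 - p + p * Real.exp t := rfl
        nlinarith [sq_nonneg (p * Real.exp t - (1 - p))]
      linarith
  have hGle : ∀ t, 0 ≤ t → G t ≤ p + t / 4 := by
    intro t ht
    have h3 := hKanti ht
    have h4 : K 0 = p := by
      simp only [hK, hG, hD]
      simp [Real.exp_zero]
    have h5 : K t = G t - t/4 := rfl
    rw [h4] at h3
    linarith [h3, h5 ▸ h3]
  -- L := p t + t²/8 - log (D t) is monotone on [0, ∞)
  set L : ℝ → ℝ := fun t => p * t + t ^ 2 / 8 - Real.log (D t) with hL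
  have hLd : ∀ t, HasDerivAt L (p + t / 4 - G t) t := by
    intro t
    have hlog : HasDerivAt (fun t => Real.log (D t)) (p * Real.exp t / D t) t :=
      (hDd t).log (ne_of_gt (hDpos t))
    have hpoly : HasDerivAt (fun t : ℝ => p * t + t ^ 2 / 8) (p + t / 4) t := by
      have h1 : HasDerivAt (fun t : ℝ => p * t) p t := by
        simpa using (hasDerivAt_id t).const_mul p
      have h2 : HasDerivAt (fun t : ℝ => t ^ 2 / 8) (t / 4) t := by
        have := (hasDerivAt_pow 2 t).div_const 8
        refine this.congr_deriv ?_
        ring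
      exact h1.add h2
    exact hpoly.sub hlog
  have hLmono : MonotoneOn L (Set.Ici 0) := by
    apply monotoneOn_of_deriv_nonneg (convex_Ici 0)
    · have hdiff : Differentiable ℝ L := fun t => (hLd t).differentiableAt
      exact hdiff.continuous.continuousOn
    · intro t ht
      exact (hLd t).differentiableAt.differentiableWithinAt
    · intro t ht
      rw [(hLd t).deriv]
      have ht0 : (0:ℝ) ≤ t := le_of_lt (by simpa using ht)
      linarith [hGle t ht0]
  have hL0 : L 0 = 0 := by
    simp only [hL, hD]
    simp [Real.exp_zero]
  have hLu : 0 ≤ L u := by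
    have := hLmono (Set.self_mem_Ici) (Set.mem_Ici.2 hu) hu
    rw [hL0] at this; exact this
  have hlogle : Real.log (D u) ≤ p * u + u ^ 2 / 8 := by
    simp only [hL] at hLu; linarith
  have := (Real.log_le_iff_le_exp (hDpos u)).1 hlogle
  simpa [hD] using this

lemma bad_count_bound {n s a : ℕ} (hn : 0 < n) (hs : 0 < s) (hsn : s ≤ n)
    (T : Finset (Fin n)) (q : ℝ) (hq : 0 ≤ q)
    (hcond : (T.card : ℝ) * s + q * n ≤ (a : ℝ) * n) :
    (((((Finset.univ : Finset (Fin n)).powersetCard s)).filter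
        (fun A => a ≤ (A ∩ T).card)).card : ℝ)
      ≤ (n.choose s : ℝ) * Real.exp (-2 * q ^ 2 / s) := by
  set m := T.card with hm
  have hmn : m ≤ n := by
    calc m ≤ Fintype.card (Fin n) := by
          rw [hm, ← Finset.card_univ]; exact Finset.card_le_card (Finset.subset_univ T)
      _ = n := Fintype.card_fin n
  set p : ℝ := (m : ℝ) / n with hp
  have hp0 : 0 ≤ p := by positivity
  have hp1 : p ≤ 1 := by
    rw [hp, div_le_one (by exact_mod_cast hn)]
    exact_mod_cast hmn
  set u : ℝ := 4 * q / s with hu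
  have hu0 : 0 ≤ u := by positivity
  set y : ℝ := Real.exp u with hy
  have hy1 : 1 ≤ y := Real.one_le_exp hu0
  set bad := (((Finset.univ : Finset (Fin n)).powersetCard s)).filter
      (fun A => a ≤ (A ∩ T).card) with hbad
  have hya : (0:ℝ) < y ^ a := by positivity
  -- step 1 : bad.card * y^a ≤ sum over all A of y^(A∩T).card
  have step1 : (bad.card : ℝ) * y ^ a
      ≤ ∑ A ∈ (Finset.univ : Finset (Fin n)).powersetCard s, y ^ (A ∩ T).card := by
    calc (bad.card : ℝ) * y ^ a = ∑ A ∈ bad, y ^ a := by rw [Finset.sum_const, nsmul_eq_mul]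
      _ ≤ ∑ A ∈ bad, y ^ (A ∩ T).card := by
          apply Finset.sum_le_sum
          intro A hA
          exact pow_le_pow_right₀ hy1 (Finset.mem_filter.1 hA).2
      _ ≤ ∑ A ∈ (Finset.univ : Finset (Fin n)).powersetCard s, y ^ (A ∩ T).card := by
          apply Finset.sum_le_sum_of_subset_of_nonneg (Finset.filter_subset _ _)
          intro A _ _; positivity
  have step2 := chvatal hsn hn T y hy1
  -- step 3 : (1 + p (y-1))^s ≤ exp (s * (p u + u²/8))
  have step3 : (1 + p * (y - 1)) ^ s ≤ Real.exp ((s : ℝ) * (p * u + u ^ 2 / 8)) := by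
    have h1 : 1 + p * (y - 1) = 1 - p + p * Real.exp u := by rw [hy]; ring
    have h2 := bern_mgf p u hp0 hp1 hu0
    calc (1 + p * (y - 1)) ^ s ≤ (Real.exp (p * u + u ^ 2 / 8)) ^ s := by
          apply pow_le_pow_left₀ (by nlinarith) (h1 ▸ h2)
      _ = Real.exp ((s : ℝ) * (p * u + u ^ 2 / 8)) := by
          rw [← Real.exp_nat_mul]
  -- combine
  have hcomb : (bad.card : ℝ) * y ^ a
      ≤ (n.choose s : ℝ) * Real.exp ((s : ℝ) * (p * u + u ^ 2 / 8)) := by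
    calc (bad.card : ℝ) * y ^ a ≤ _ := step1
      _ ≤ (n.choose s : ℝ) * (1 + p * (y - 1)) ^ s := step2
      _ ≤ (n.choose s : ℝ) * Real.exp ((s : ℝ) * (p * u + u ^ 2 / 8)) := by
          apply mul_le_mul_of_nonneg_left step3 (by positivity)
  have hyaexp : y ^ a = Real.exp ((a : ℝ) * u) := by
    rw [hy, ← Real.exp_nat_mul]
  have hfinal : (bad.card : ℝ) ≤ (n.choose s : ℝ)
      * Real.exp ((s : ℝ) * (p * u + u ^ 2 / 8) - (a : ℝ) * u) := by
    rw [Real.exp_sub, ← hyaexp,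
      show (n.choose s : ℝ) * (Real.exp ((s : ℝ) * (p * u + u ^ 2 / 8)) / y ^ a)
        = (n.choose s : ℝ) * Real.exp ((s : ℝ) * (p * u + u ^ 2 / 8)) / y ^ a by ring,
      le_div_iff₀ hya]
    exact hcomb
  refine hfinal.trans (mul_le_mul_of_nonneg_left (Real.exp_le_exp.2 ?_) (by positivity))
  -- exponent inequality
  have hs' : (0:ℝ) < s := by exact_mod_cast hs
  have hn' : (0:ℝ) < n := by exact_mod_cast hn
  have hup : u = 4 * q / s := rfl
  have e : (s : ℝ) * (p * u + u ^ 2 / 8) - (a : ℝ) * u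
      = 4 * q * p + 2 * q ^ 2 / s - 4 * q * (a : ℝ) / s := by
    rw [hup]; field_simp; ring
  rw [e, hp]
  have hmul := mul_le_mul_of_nonneg_left hcond hq
  have hnum : 0 ≤ (q * ((a:ℝ) * n) - q * ((m:ℝ) * s + q * n)) * 4 / ((n:ℝ) * s) :=
    div_nonneg (by nlinarith [hmul]) (by positivity)
  have expand : -2 * q ^ 2 / (s:ℝ) - (4 * q * ((m:ℝ) / n) + 2 * q ^ 2 / s - 4 * q * (a:ℝ) / s)
      = (q * ((a:ℝ) * n) - q * ((m:ℝ) * s + q * n)) * 4 / ((n:ℝ) * s) := by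
    field_simp
    ring
  linarith [hnum, expand]

lemma prob_le {n s : ℕ} (hsn : s ≤ n) {Ω : Type*} [MeasurableSpace Ω] (μ : Measure Ω)
    (S : Ω → Finset (Fin n)) (hScard : ∀ ω, (S ω).card = s)
    (hunif : ∀ A : Finset (Fin n), A.card = s → μ {ω | S ω = A} = 1 / (n.choose s))
    (P : Finset (Fin n) → Prop) [DecidablePred P] (E : ℝ)
    (hcount : ((((Finset.univ : Finset (Fin n)).powersetCard s).filter
        (fun A => P A)).card : ℝ) ≤ (n.choose s : ℝ) * E) :
    μ {ω | P (S ω)} ≤ ENNReal.ofReal E := by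
  set bad := ((Finset.univ : Finset (Fin n)).powersetCard s).filter (fun A => P A) with hbad
  have h1 : {ω | P (S ω)} ⊆ ⋃ A ∈ bad, {ω | S ω = A} := by
    intro ω hω
    simp only [Set.mem_iUnion]
    refine ⟨S ω, ?_, rfl⟩
    simp only [hbad, mem_filter, mem_powersetCard]
    exact ⟨⟨Finset.subset_univ _, hScard ω⟩, hω⟩
  have hC : (0:ℝ) < (n.choose s : ℝ) := by exact_mod_cast Nat.choose_pos hsn
  calc μ {ω | P (S ω)} ≤ μ (⋃ A ∈ bad, {ω | S ω = A}) := measure_mono h1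
    _ ≤ ∑ A ∈ bad, μ {ω | S ω = A} := measure_biUnion_finset_le _ _
    _ = ∑ A ∈ bad, (1 / (n.choose s : ℝ≥0∞)) := by
        refine Finset.sum_congr rfl (fun A hA => ?_)
        exact hunif A (mem_powersetCard.1 (Finset.mem_filter.1 hA).1).2
    _ = (bad.card : ℝ≥0∞) * (1 / (n.choose s : ℝ≥0∞)) := by
        rw [Finset.sum_const, nsmul_eq_mul]
    _ ≤ ENNReal.ofReal E := by
        rw [show ((bad.card : ℝ≥0∞)) = ENNReal.ofReal (bad.card : ℝ) by simp,
          show (1 / ((n.choose s : ℕ) : ℝ≥0∞)) = ENNReal.ofReal (1 / (n.choose s : ℝ)) by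
            rw [ENNReal.ofReal_div_of_pos hC]; simp,
          ← ENNReal.ofReal_mul (by positivity)]
        apply ENNReal.ofReal_le_ofReal
        rw [mul_one_div, div_le_iff₀ hC]
        linarith [hcount]

lemma le_card_filter_lt (s' : Multiset ℝ) (a : ℕ) (ha : 1 ≤ a) (has : a ≤ Multiset.card s')
    (τ : ℝ) (h : (s'.sort (· ≤ ·)).getD (a - 1) 0 < τ) :
    a ≤ Multiset.card (s'.filter (fun v => v < τ)) := by
  set l := s'.sort (· ≤ ·) with hl
  have hlen : l.length = Multiset.card s' := Multiset.length_sort _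
  have hsorted : l.Pairwise (· ≤ ·) := Multiset.pairwise_sort _ _
  have hia : a - 1 < l.length := by omega
  have hval : l.getD (a-1) 0 = l[a-1] := List.getD_eq_getElem l 0 hia
  have htake : ∀ v ∈ l.take a, v < τ := by
    intro v hv
    obtain ⟨i, hi, hvi⟩ := List.mem_iff_getElem.1 hv
    have hi' : i < l.length := by
      have := List.length_take (i := a) (l := l); omega
    have hvl : v = l[i] := by rw [← hvi, List.getElem_take]
    have hile : i ≤ a - 1 := by
      have : i < min a l.length := by simpa using hi
      omega
    have : l[i] ≤ l[a-1] :=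
      hsorted.rel_get_of_le (a := ⟨i, hi'⟩) (b := ⟨a-1, hia⟩) (by simpa using hile)
    rw [hvl]
    calc l[i] ≤ l[a-1] := this
      _ < τ := hval ▸ h
  have hmle : (↑(l.take a) : Multiset ℝ) ≤ s'.filter (fun v => v < τ) := by
    rw [Multiset.le_filter]
    constructor
    · have h2 : (↑(l.take a) : Multiset ℝ) ≤ ↑l := (List.take_sublist a l).subperm
      rwa [hl, Multiset.sort_eq] at h2
    · exact htake
  have h3 := Multiset.card_le_card hmle
  simp only [Multiset.coe_card, List.length_take] at h3
  omega

lemma le_card_filter_gt (s' : Multiset ℝ) (a : ℕ) (ha : 1 ≤ a) (has : a ≤ Multiset.card s')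
    (τ : ℝ) (h : τ < (s'.sort (· ≤ ·)).getD (a - 1) 0) :
    Multiset.card s' - a + 1 ≤ Multiset.card (s'.filter (fun v => τ < v)) := by
  set l := s'.sort (· ≤ ·) with hl
  have hlen : l.length = Multiset.card s' := Multiset.length_sort _
  have hsorted : l.Pairwise (· ≤ ·) := Multiset.pairwise_sort _ _
  have hia : a - 1 < l.length := by omega
  have hval : l.getD (a-1) 0 = l[a-1] := List.getD_eq_getElem l 0 hia
  have hdrop : ∀ v ∈ l.drop (a-1), τ < v := by
    intro v hv
    obtain ⟨i, hi, hvi⟩ := List.mem_iff_getElem.1 hv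
    have hi' : a - 1 + i < l.length := by
      have := List.length_drop (i := a-1) (l := l); omega
    have hvl : v = l[a-1+i] := by rw [← hvi, List.getElem_drop]
    have : l[a-1] ≤ l[a-1+i] :=
      hsorted.rel_get_of_le (a := ⟨a-1, hia⟩) (b := ⟨a-1+i, hi'⟩) (by simp)
    rw [hvl]
    calc τ < l[a-1] := hval ▸ h
      _ ≤ l[a-1+i] := this
  have hmle : (↑(l.drop (a-1)) : Multiset ℝ) ≤ s'.filter (fun v => τ < v) := by
    rw [Multiset.le_filter]
    constructor
    · have h2 : (↑(l.drop (a-1)) : Multiset ℝ) ≤ ↑l := (List.drop_sublist (a-1) l).subperm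
      rwa [hl, Multiset.sort_eq] at h2
    · exact hdrop
  have h3 := Multiset.card_le_card hmle
  simp only [Multiset.coe_card, List.length_drop] at h3
  omega

lemma kthSmallest_univ' {n : ℕ} (x : Fin n → ℝ) (hx : Monotone x) (i : ℕ) (hi : i < n) :
    (((Finset.univ : Finset (Fin n)).val.map x).sort (· ≤ ·)).getD i 0 = x ⟨i, hi⟩ := by
  have h1 : (Finset.univ : Finset (Fin n)).val.map x = ↑(List.ofFn x) := Fin.univ_val_map x
  have h2 : ((↑(List.ofFn x) : Multiset ℝ)).sort (· ≤ ·) = List.ofFn x := by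
    apply List.Perm.eq_of_pairwise' (Multiset.pairwise_sort _ _) (hx.sortedLE_ofFn.pairwise)
      (Multiset.coe_eq_coe.1 (Multiset.sort_eq _ _))
  rw [h1, h2]
  have hi' : i < (List.ofFn x).length := by simpa using hi
  rw [List.getD_eq_getElem _ 0 hi', List.getElem_ofFn]

end Helpers

set_option maxHeartbeats 1000000 in
/-- Middle-case corollary: if `n/2 - gn/s ≤ k ≤ n/2 + gn/s` and the pivot `v` is the
`⌈s/2⌉`-th smallest element of a uniformly random `s`-element sample, then
`P[v < x*_{j_l}] ≤ exp (-2g²/s)` and `P[x*_{j_r} < v] ≤ exp (-2g²/s)`. -/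
theorem median_pivot_tails
    (n s k : ℕ) (hs : 1 ≤ s) (hsn : s ≤ n) (hk1 : 1 ≤ k) (hkn : k ≤ n)
    (g : ℝ) (hg : 0 ≤ g)
    (hkl : (n : ℝ) / 2 - g * n / s ≤ k) (hkr : (k : ℝ) ≤ (n : ℝ) / 2 + g * n / s)
    (x : Fin n → ℝ) (hx : Monotone x)
    {Ω : Type*} [MeasurableSpace Ω] (μ : Measure Ω) [IsProbabilityMeasure μ]
    (S : Ω → Finset (Fin n)) (hScard : ∀ ω, (S ω).card = s)
    (hunif : ∀ A : Finset (Fin n), A.card = s →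
      μ {ω | S ω = A} = 1 / (n.choose s))
    (jl : ℤ) (hjl : jl = max ⌈(n : ℝ) / 2 - g * n / s⌉ 1)
    (jr : ℤ) (hjr : jr = min ⌈(n : ℝ) / 2 + g * n / s⌉ (n : ℤ)) :
    μ {ω | kthSmallest ((S ω).val.map x) (⌈(s : ℝ) / 2⌉).toNat <
           kthSmallest ((Finset.univ : Finset (Fin n)).val.map x) jl.toNat} ≤
      ENNReal.ofReal (Real.exp (-2 * g ^ 2 / s)) ∧
    μ {ω | kthSmallest ((Finset.univ : Finset (Fin n)).val.map x) jr.toNat <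
           kthSmallest ((S ω).val.map x) (⌈(s : ℝ) / 2⌉).toNat} ≤
      ENNReal.ofReal (Real.exp (-2 * g ^ 2 / s)) := by
  have hn : 0 < n := hs.trans hsn
  have hs' : (0:ℝ) < s := by exact_mod_cast hs
  have hn' : (0:ℝ) < n := by exact_mod_cast hn
  set E : ℝ := Real.exp (-2 * g ^ 2 / s) with hE
  set a : ℕ := (⌈(s : ℝ) / 2⌉).toNat with hadef
  have hceil_pos : (0:ℤ) < ⌈(s:ℝ)/2⌉ := Int.ceil_pos.2 (by positivity)
  have hca : (a : ℤ) = ⌈(s:ℝ)/2⌉ := Int.toNat_of_nonneg (le_of_lt hceil_pos)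
  have haR : ((a : ℝ)) = (⌈(s:ℝ)/2⌉ : ℤ) := by exact_mod_cast congrArg (Int.cast : ℤ → ℝ) hca
  have ha1 : 1 ≤ a := by omega
  have ha_half : (s : ℝ) / 2 ≤ (a : ℝ) := by rw [haR]; exact Int.le_ceil _
  have ha_half' : (a : ℝ) < (s : ℝ) / 2 + 1 := by rw [haR]; exact Int.ceil_lt_add_one _
  have has : a ≤ s := by
    have h2 : ((a:ℝ)) < s + 1 := by
      have : (s:ℝ)/2 + 1 ≤ s + 1 := by linarith
      linarith
    exact_mod_cast Nat.lt_succ_iff.1 (by exact_mod_cast h2)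
  constructor
  · -- LEFT TAIL
    have hjl1 : 1 ≤ jl := hjl ▸ le_max_right _ 1
    have hjln : jl ≤ n := by
      rw [hjl]
      apply max_le _ (by exact_mod_cast hn)
      apply Int.ceil_le.2
      push_cast
      have h0 : 0 ≤ g * n / s := by positivity
      linarith
    set jln := jl.toNat with hjlndef
    have hjlnat : (jln : ℤ) = jl := Int.toNat_of_nonneg (by omega)
    have hjln1 : 1 ≤ jln := by omega
    have hjlnn : jln ≤ n := by omega
    set ml := jln - 1 with hmldef
    have hmln : ml < n := by omega
    set T : Finset (Fin n) := Finset.attachFin (Finset.range ml)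
      (fun m hm => lt_of_lt_of_le (Finset.mem_range.1 hm) (by omega)) with hT
    have hTcard : T.card = ml := by rw [Finset.card_attachFin, Finset.card_range]
    set τ : ℝ := x ⟨ml, hmln⟩ with hτ
    have hkth : kthSmallest ((Finset.univ : Finset (Fin n)).val.map x) jln = τ := by
      rw [kthSmallest, ← hmldef]
      exact kthSmallest_univ' x hx ml hmln
    -- event inclusion
    have hincl : {ω | kthSmallest ((S ω).val.map x) a <
        kthSmallest ((Finset.univ : Finset (Fin n)).val.map x) jln}
        ⊆ {ω | a ≤ ((S ω) ∩ T).card} := by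
      intro ω hω
      simp only [Set.mem_setOf_eq] at hω ⊢
      rw [hkth] at hω
      have hcards' : Multiset.card ((S ω).val.map x) = s := by
        rw [Multiset.card_map]; exact hScard ω
      have h1 : a ≤ Multiset.card (((S ω).val.map x).filter (fun v => v < τ)) :=
        le_card_filter_lt _ a ha1 (by omega) τ hω
      have h2 : ((S ω).val.map x).filter (fun v => v < τ)
          = ((S ω).val.filter (fun i => x i < τ)).map x := by
        rw [Multiset.filter_map]
        rfl
      rw [h2, Multiset.card_map] at h1
      have h3 : ((S ω).filter (fun i => x i < τ)).card ≤ ((S ω) ∩ T).card := by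
        apply Finset.card_le_card
        intro i hi
        rw [Finset.mem_filter] at hi
        rw [Finset.mem_inter]
        refine ⟨hi.1, ?_⟩
        rw [hT, Finset.mem_attachFin, Finset.mem_range]
        by_contra hc
        push_neg at hc
        have : τ ≤ x i := hx (show (⟨ml, hmln⟩ : Fin n) ≤ i from hc)
        linarith [hi.2]
      calc a ≤ ((S ω).filter (fun i => x i < τ)).card := h1
        _ ≤ _ := h3
    -- counting hypothesis
    have hcount : ((((Finset.univ : Finset (Fin n)).powersetCard s).filter
        (fun A => a ≤ (A ∩ T).card)).card : ℝ) ≤ (n.choose s : ℝ) * E := by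
      rcases Nat.eq_zero_or_pos ml with hml0 | hml1
      · have hTe : T = ∅ := by
          rw [hT]
          ext i
          simp [Finset.mem_attachFin, hml0]
        have : (((Finset.univ : Finset (Fin n)).powersetCard s).filter
            (fun A => a ≤ (A ∩ T).card)) = ∅ := by
          apply Finset.filter_eq_empty_iff.2
          intro A _
          rw [hTe]
          simp
          omega
        rw [this]
        simp only [Finset.card_empty, Nat.cast_zero]
        positivity
      · -- ml ≥ 1 : jl = ceil
        have hjl2 : 2 ≤ jl := by omega
        have hceil2 : 2 ≤ ⌈(n : ℝ) / 2 - g * n / s⌉ := by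
          rcases max_cases (⌈(n : ℝ) / 2 - g * n / s⌉) (1:ℤ) with ⟨heq, _⟩ | ⟨heq, hlt⟩
          · rw [hjl, heq] at hjl2; exact hjl2
          · rw [hjl, heq] at hjl2; omega
        have hjleq : jl = ⌈(n : ℝ) / 2 - g * n / s⌉ := by
          rw [hjl, max_eq_left (by omega)]
        have hmlR : (ml : ℝ) < (n : ℝ) / 2 - g * n / s := by
          have h1 : ((jl : ℝ)) < (n : ℝ) / 2 - g * n / s + 1 := by
            rw [hjleq]
            exact_mod_cast Int.ceil_lt_add_one _
          have h2 : (ml : ℝ) = (jl : ℝ) - 1 := by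
            have : ((ml : ℤ) : ℝ) = ((jl - 1 : ℤ) : ℝ) := by
              congr 1
              omega
            push_cast at this
            linarith [this]
          linarith
        apply bad_count_bound hn hs hsn T g hg
        rw [hTcard]
        have h4 : (ml:ℝ) * s < ((n : ℝ) / 2 - g * n / s) * s :=
          mul_lt_mul_of_pos_right hmlR hs'
        have h5 : ((n : ℝ) / 2 - g * n / s) * s = n * s / 2 - g * n := by
          field_simp
        have h6 : (s:ℝ)/2 * n ≤ (a:ℝ) * n := mul_le_mul_of_nonneg_right ha_half (le_of_lt hn')
        nlinarith [h4, h5, h6]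
    have := prob_le hsn μ S hScard hunif (fun A => a ≤ (A ∩ T).card) E hcount
    exact le_trans (measure_mono hincl) this
  · -- RIGHT TAIL
    have hjr1 : 1 ≤ jr := by
      rw [hjr]
      apply le_min _ (by exact_mod_cast hn)
      apply Int.ceil_pos.2
      positivity
    have hjrn : jr ≤ n := hjr ▸ min_le_right _ _
    set jrn := jr.toNat with hjrndef
    have hjrnat : (jrn : ℤ) = jr := Int.toNat_of_nonneg (by omega)
    have hjrn1 : 1 ≤ jrn := by omega
    have hjrnn : jrn ≤ n := by omega
    set mr := n - jrn with hmrdef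
    set T : Finset (Fin n) := Finset.attachFin (Finset.Ico jrn n)
      (fun m hm => (Finset.mem_Ico.1 hm).2) with hT
    have hTcard : T.card = mr := by rw [Finset.card_attachFin, Nat.card_Ico]
    have hjrn1n : jrn - 1 < n := by omega
    set τ : ℝ := x ⟨jrn - 1, hjrn1n⟩ with hτ
    have hkth : kthSmallest ((Finset.univ : Finset (Fin n)).val.map x) jrn = τ := by
      rw [kthSmallest]
      exact kthSmallest_univ' x hx (jrn - 1) hjrn1n
    set b := s - a + 1 with hbdef
    have hincl : {ω | kthSmallest ((Finset.univ : Finset (Fin n)).val.map x) jrn <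
        kthSmallest ((S ω).val.map x) a}
        ⊆ {ω | b ≤ ((S ω) ∩ T).card} := by
      intro ω hω
      simp only [Set.mem_setOf_eq] at hω ⊢
      rw [hkth] at hω
      have hcards' : Multiset.card ((S ω).val.map x) = s := by
        rw [Multiset.card_map]; exact hScard ω
      have h1 : s - a + 1 ≤ Multiset.card (((S ω).val.map x).filter (fun v => τ < v)) := by
        have := le_card_filter_gt _ a ha1 (by omega) τ hω
        rwa [hcards'] at this
      have h2 : ((S ω).val.map x).filter (fun v => τ < v)
          = ((S ω).val.filter (fun i => τ < x i)).map x := by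
        rw [Multiset.filter_map]
        rfl
      rw [h2, Multiset.card_map] at h1
      have h3 : ((S ω).filter (fun i => τ < x i)).card ≤ ((S ω) ∩ T).card := by
        apply Finset.card_le_card
        intro i hi
        rw [Finset.mem_filter] at hi
        rw [Finset.mem_inter]
        refine ⟨hi.1, ?_⟩
        rw [hT, Finset.mem_attachFin, Finset.mem_Ico]
        refine ⟨?_, i.isLt⟩
        by_contra hc
        push_neg at hc
        have hile : (i : ℕ) ≤ jrn - 1 := by omega
        have : x i ≤ τ := hx (show i ≤ (⟨jrn - 1, hjrn1n⟩ : Fin n) from hile)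
        linarith [hi.2]
      calc b ≤ ((S ω).filter (fun i => τ < x i)).card := h1
        _ ≤ _ := h3
    have hcount : ((((Finset.univ : Finset (Fin n)).powersetCard s).filter
        (fun A => b ≤ (A ∩ T).card)).card : ℝ) ≤ (n.choose s : ℝ) * E := by
      rcases Nat.eq_zero_or_pos mr with hmr0 | hmr1
      · have hTe : T = ∅ := by
          rw [hT]
          ext i
          simp only [Finset.mem_attachFin, Finset.mem_Ico, Finset.notMem_empty, iff_false]
          omega
        have : (((Finset.univ : Finset (Fin n)).powersetCard s).filter
            (fun A => b ≤ (A ∩ T).card)) = ∅ := by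
          apply Finset.filter_eq_empty_iff.2
          intro A _
          rw [hTe]
          simp only [Finset.inter_empty, Finset.card_empty, Nat.le_zero, hbdef]
          omega
        rw [this]
        simp only [Finset.card_empty, Nat.cast_zero]
        positivity
      · have hjrlt : jr < n := by omega
        have hjreq : jr = ⌈(n : ℝ) / 2 + g * n / s⌉ := by
          rcases min_cases (⌈(n : ℝ) / 2 + g * n / s⌉) ((n:ℤ)) with ⟨heq, _⟩ | ⟨heq, hlt⟩
          · rw [hjr, heq]
          · rw [hjr] at hjrlt; omega
        have hjrR : (n : ℝ) / 2 + g * n / s ≤ ((jr : ℤ) : ℝ) := by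
          rw [hjreq]; exact Int.le_ceil _
        have hmrR : (mr : ℝ) ≤ (n : ℝ) / 2 - g * n / s := by
          have h2 : ((mr : ℤ) : ℝ) = (n : ℝ) - ((jr : ℤ) : ℝ) := by
            have : (mr : ℤ) = n - jr := by omega
            rw [this]
            push_cast
            ring
          push_cast at h2
          linarith
        apply bad_count_bound hn hs hsn T g hg
        rw [hTcard]
        have hbR : (b : ℝ) = (s : ℝ) - a + 1 := by
          rw [hbdef]
          push_cast [has]
          ring
        have hb_half : (s : ℝ) / 2 ≤ (b : ℝ) := by
          rw [hbR]; linarith [ha_half']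
        have h4 : (mr:ℝ) * s ≤ ((n : ℝ) / 2 - g * n / s) * s :=
          mul_le_mul_of_nonneg_right hmrR (le_of_lt hs')
        have h5 : ((n : ℝ) / 2 - g * n / s) * s = n * s / 2 - g * n := by
          field_simp
        have h6 : (s:ℝ)/2 * n ≤ (b:ℝ) * n := mul_le_mul_of_nonneg_right hb_half (le_of_lt hn')
        nlinarith [h4, h5, h6]
    have := prob_le hsn μ S hScard hunif (fun A => b ≤ (A ∩ T).card) E hcount
    exact le_trans (measure_mono hincl) this
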